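/- arXiv:2304.05651 — 6 statements merged into one kernel-verified Lean document; each statement's English description precedes it below -/
import Mathlib

section
/- For all nonnegative integers n and real x, the degenerate Bell polynomial satisfies the Dobinski-like formula: φ_{n,λ}(x) = e^{-x} ∑_{k=0}^∞ (k)_{n,λ} x^k / k!, where (k)_{n,λ} = k(k-λ)(k-2λ)⋯(k-(n-1)λ) is the degenerate falling factorial. -/
/-!
For `|λt| < 1` the binomial series gives `e_λ^k(t) = ∑ₙ (k)_{n,λ} tⁿ/n!`, hence
`e^x · e^{x(e_λ(t) - 1)} = e^{x e_λ(t)} = ∑ₖ xᵏ/k! e_λ^k(t) = ∑ₖ ∑ₙ xᵏ/k! (k)_{n,λ} tⁿ/n!`.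
The double series converges absolutely, being dominated termwise by the same series for
`-|λ|, |x|, |t|`, so it may be summed in the other order; comparing the coefficients of `tⁿ`
with those of the generating function of `φ_{n,λ}(x)` gives the formula.
-/

open Real MeasureTheory ProbabilityTheory Filter Asymptotics

/-- The degenerate falling factorial `(x)_{n,l} = x(x-l)(x-2l)...(x-(n-1)l)`. -/
noncomputable def dFall (l x : ℝ) (n : ℕ) : ℝ := ∏ i ∈ Finset.range n, (x - i * l)

/-- The degenerate exponential `e_l^x(t) = (1 + l t)^(x/l)`. -/
noncomputable def degExp (l x t : ℝ) : ℝ := (1 + l * t) ^ (x / l)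

open Topology

theorem hasFPowerSeriesAt_ofScalars_of_eventually_hasSum {𝕜 : Type*} [RCLike 𝕜] {f : 𝕜 → 𝕜}
    {a : ℕ → 𝕜} (h : ∀ᶠ t in 𝓝 0, HasSum (fun n => a n * t ^ n) (f t)) :
    HasFPowerSeriesAt f (FormalMultilinearSeries.ofScalars 𝕜 a) 0 := by
  obtain ⟨r, hr, hball⟩ := Metric.eventually_nhds_iff.1 h
  lift r to NNReal using hr.le
  obtain ⟨ρ, hρ0, hρr⟩ := exists_between (α := NNReal) (by exact_mod_cast hr)
  refine ⟨ρ, ?_, by simpa using hρ0, fun {y} hy => ?_⟩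
  · have hs := (hball (y := ((ρ : ℝ) : 𝕜)) (by simpa using hρr)).summable.tendsto_atTop_zero.norm
    refine FormalMultilinearSeries.le_radius_of_tendsto _ (l := 0) ?_
    simpa [FormalMultilinearSeries.ofScalars_norm] using hs
  · have hy : ‖y‖ < r := (by simpa using hy : ‖y‖ < ρ).trans (by exact_mod_cast hρr)
    simpa [FormalMultilinearSeries.ofScalars_apply_eq, mul_comm] using hball (by simpa using hy)

theorem coeff_eq_of_eventually_hasSum {𝕜 : Type*} [RCLike 𝕜] {f : 𝕜 → 𝕜} {a b : ℕ → 𝕜}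
    (ha : ∀ᶠ t in 𝓝 0, HasSum (fun n => a n * t ^ n) (f t))
    (hb : ∀ᶠ t in 𝓝 0, HasSum (fun n => b n * t ^ n) (f t)) : a = b :=
  FormalMultilinearSeries.ofScalars_series_injective 𝕜 (E := 𝕜)
    ((hasFPowerSeriesAt_ofScalars_of_eventually_hasSum ha).eq_formalMultilinearSeries
      (hasFPowerSeriesAt_ofScalars_of_eventually_hasSum hb))

section

-- Closed before the main theorem, whose variable `φ` would otherwise parse as `Nat.totient`.
open Nat

theorem Ring.choose_eq_prod_range_div {K : Type*} [Field K] [CharZero K] (a : K) (n : ℕ) :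
    Ring.choose a n = (∏ j ∈ Finset.range n, (a - j)) / n ! := by
  rw [Ring.choose_eq_smul, ← Polynomial.aeval_eq_smeval, Polynomial.aeval_def,
    ← Polynomial.eval_map, descPochhammer_map, descPochhammer_eval_eq_prod_range,
    smul_eq_mul, inv_mul_eq_div]

theorem dFall_eq_pow_mul_factorial_mul_choose {l : ℝ} (hl : l ≠ 0) (y : ℝ) (n : ℕ) :
    dFall l y n = l ^ n * n ! * Ring.choose (y / l) n := by
  have hpow : l ^ n = ∏ _j ∈ Finset.range n, l := by simp
  rw [Ring.choose_eq_prod_range_div, mul_assoc, mul_div_cancel₀ _ (by positivity), hpow,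
    ← Finset.prod_mul_distrib, dFall]
  refine Finset.prod_congr rfl fun j _ => ?_
  field_simp

theorem hasSum_dFall_mul_pow_div_factorial {l : ℝ} (hl : l ≠ 0) (y : ℝ) {t : ℝ}
    (ht : |l * t| < 1) :
    HasSum (fun n => dFall l y n * t ^ n / n !) (degExp l y t) := by
  have h := Real.one_add_rpow_hasFPowerSeriesOnBall_zero (a := y / l) |>.hasSum
    (y := l * t) (by
      rw [Metric.mem_eball, edist_zero_right, Real.enorm_eq_ofReal_abs]
      exact ENNReal.ofReal_lt_one.2 ht)
  simp only [binomialSeries, FormalMultilinearSeries.ofScalars_apply_eq, zero_add] at h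
  have e : ∀ n, dFall l y n * t ^ n / n ! = Ring.choose (y / l) n • (l * t) ^ n := fun n => by
    rw [dFall_eq_pow_mul_factorial_mul_choose hl, smul_eq_mul, mul_pow]
    field_simp
  simp only [← e] at h
  exact h

theorem abs_dFall_le {y : ℝ} (hy : 0 ≤ y) (l : ℝ) (n : ℕ) : |dFall l y n| ≤ dFall (-|l|) y n := by
  rw [dFall, dFall, Finset.abs_prod]
  refine Finset.prod_le_prod (fun _ _ => abs_nonneg _) fun j _ => ?_
  calc |y - j * l| ≤ |y| + |j * l| := abs_sub _ _
    _ = y - j * -|l| := by rw [abs_of_nonneg hy, abs_mul, Nat.abs_cast]; ring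

theorem degExp_natCast {l t : ℝ} (h : 0 ≤ 1 + l * t) (k : ℕ) :
    degExp l k t = degExp l 1 t ^ k := by
  rw [degExp, degExp, ← Real.rpow_natCast, ← Real.rpow_mul h, one_div_mul_eq_div]

theorem hasSum_pow_div_factorial_mul_degExp {l t : ℝ} (h : 0 ≤ 1 + l * t) (x : ℝ) :
    HasSum (fun k : ℕ => x ^ k / k ! * degExp l k t) (exp (x * degExp l 1 t)) := by
  have he := NormedSpace.expSeries_div_hasSum_exp (x * degExp l 1 t)
  have e : ∀ k : ℕ, (x * degExp l 1 t) ^ k / k ! = x ^ k / k ! * degExp l k t := fun k => by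
    rw [degExp_natCast h, mul_pow]
    ring
  simp only [e, ← Real.exp_eq_exp_ℝ] at he
  exact he

noncomputable def expDegExpTerm (l x t : ℝ) (p : ℕ × ℕ) : ℝ :=
  x ^ p.1 / p.1 ! * (dFall l p.1 p.2 * t ^ p.2 / p.2 !)

theorem hasSum_expDegExpTerm_row {l : ℝ} (hl : l ≠ 0) (x : ℝ) {t : ℝ} (ht : |l * t| < 1)
    (k : ℕ) : HasSum (fun n => expDegExpTerm l x t (k, n)) (x ^ k / k ! * degExp l k t) :=
  (hasSum_dFall_mul_pow_div_factorial hl k ht).mul_left _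

theorem summable_expDegExpTerm {l : ℝ} (hl : l ≠ 0) (x : ℝ) {t : ℝ} (ht : |l * t| < 1) :
    Summable (expDegExpTerm l x t) := by
  have hl' : -|l| ≠ 0 := by simpa using hl
  have ht' : |(-|l|) * (|t|)| < 1 := by rwa [abs_mul, abs_neg, abs_abs, abs_abs, ← abs_mul]
  have h1 : 0 ≤ 1 + (-|l|) * |t| := by linarith [neg_abs_le ((-|l|) * |t|)]
  have hbound : ∀ p, ‖expDegExpTerm l x t p‖ ≤ expDegExpTerm (-|l|) |x| |t| p := fun p => by
    simp only [expDegExpTerm, Real.norm_eq_abs, abs_mul, abs_div, abs_pow, Nat.abs_cast]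
    gcongr
    exact abs_dFall_le p.1.cast_nonneg l p.2
  refine Summable.of_norm_bounded ?_ hbound
  refine (summable_prod_of_nonneg fun p => (norm_nonneg _).trans (hbound p)).2
    ⟨fun k => (hasSum_expDegExpTerm_row hl' _ ht' k).summable, ?_⟩
  simp only [fun k => (hasSum_expDegExpTerm_row hl' |x| ht' k).tsum_eq]
  exact (hasSum_pow_div_factorial_mul_degExp h1 |x|).summable

theorem hasSum_expDegExpTerm {l : ℝ} (hl : l ≠ 0) (x : ℝ) {t : ℝ} (ht : |l * t| < 1) :
    HasSum (expDegExpTerm l x t) (exp (x * degExp l 1 t)) := by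
  have h1 : 0 ≤ 1 + l * t := by linarith [neg_abs_le (l * t)]
  have hs := (summable_expDegExpTerm hl x ht).hasSum
  rwa [(hs.prod_fiberwise (hasSum_expDegExpTerm_row hl x ht)).unique
    (hasSum_pow_div_factorial_mul_degExp h1 x)] at hs

theorem summable_dFall_mul_pow_div_factorial {l : ℝ} (hl : l ≠ 0) (x : ℝ) (n : ℕ) :
    Summable fun k : ℕ => dFall l k n * x ^ k / k ! := by
  set t := (2 * l)⁻¹
  have ht : |l * t| < 1 := by norm_num [t, mul_inv, hl]
  have ht0 : t ≠ 0 := by positivity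
  have hcol := ((summable_expDegExpTerm hl x ht).prod_symm.prod_factor n).mul_right (t ^ n / n !)⁻¹
  refine hcol.congr fun k => ?_
  simp only [expDegExpTerm, Prod.fst_swap, Prod.snd_swap]
  field_simp

theorem hasSum_tsum_dFall_div_factorial_mul_pow {l : ℝ} (hl : l ≠ 0) (x : ℝ) {t : ℝ}
    (ht : |l * t| < 1) :
    HasSum (fun n : ℕ => (∑' k : ℕ, dFall l k n * x ^ k / k !) / n ! * t ^ n)
      (exp (x * degExp l 1 t)) := by
  have hswap := (Equiv.prodComm ℕ ℕ).hasSum_iff.2 (hasSum_expDegExpTerm hl x ht)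
  refine hswap.prod_fiberwise fun n => ?_
  have hcol := ((summable_dFall_mul_pow_div_factorial hl x n).hasSum).mul_right (t ^ n / n !)
  rw [div_mul_eq_mul_div, mul_div_assoc]
  refine hcol.congr_fun fun k => ?_
  simp only [Function.comp_apply, Equiv.prodComm_apply, Prod.swap_prod_mk, expDegExpTerm]
  ring

end

theorem dobinski_like_formula (l : ℝ) (hl : l ≠ 0)
    (φ : ℕ → ℝ → ℝ)
    (hφ : ∀ x t : ℝ, |l * t| < 1 →
      HasSum (fun n : ℕ => φ n x * t ^ n / (n.factorial : ℝ))
        (Real.exp (x * (degExp l 1 t - 1))))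
    (n : ℕ) (x : ℝ) :
    HasSum (fun k : ℕ => dFall l (k : ℝ) n * x ^ k / (k.factorial : ℝ))
      (Real.exp x * φ n x) := by
  have hsmall : ∀ᶠ t in 𝓝 (0 : ℝ), |l * t| < 1 :=
    (continuous_const.mul continuous_id).abs.continuousAt.eventually_lt continuousAt_const
      (by simp)
  have hφ' : ∀ t, |l * t| < 1 → HasSum (fun m => exp x * φ m x / m.factorial * t ^ m)
      (exp (x * degExp l 1 t)) := fun t ht => by
    have h := (hφ x t ht).mul_left (exp x)
    rw [← exp_add, show x + x * (degExp l 1 t - 1) = x * degExp l 1 t by ring] at h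
    exact h.congr_fun fun m => by ring
  have hcoeff := congrFun (coeff_eq_of_eventually_hasSum
    (hsmall.mono fun t => hasSum_tsum_dFall_div_factorial_mul_pow hl x)
    (hsmall.mono hφ')) n
  rw [div_left_inj' (by positivity)] at hcoeff
  exact hcoeff ▸ (summable_dFall_mul_pow_div_factorial hl x n).hasSum
end

section
/- The degenerate Bell polynomials satisfy the binomial identity φ_{n,λ}(x+y) = ∑_{k=0}^n C(n,k) φ_{k,λ}(x) φ_{n-k,λ}(y) for all n ≥ 0 and all real x, y. -/
open Real MeasureTheory ProbabilityTheory Filter Asymptotics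

/-!
Both sides of the identity are `n!` times the `t^n`-coefficient of a generating function:
`e^{(x+y)(e_λ(t)-1)}` on the left, and the product `e^{x(e_λ(t)-1)} e^{y(e_λ(t)-1)}`, expanded by
the Cauchy product of exponential generating functions, on the right. Both are real power series
converging near `0`, so their coefficients agree.
-/

section

open Finset Nat FormalMultilinearSeries

theorem hasFPowerSeriesAt_ofScalars_of_hasSum {a : ℕ → ℝ} {f : ℝ → ℝ} {r : ℝ} (hr : 0 < r)
    (ha : ∀ t : ℝ, |t| < r → HasSum (fun n ↦ a n * t ^ n) (f t)) :
    HasFPowerSeriesAt f (ofScalars ℝ a) 0 := by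
  have hr2 : 0 < r / 2 := half_pos hr
  have hr2_coe : ((r / 2).toNNReal : ℝ) = r / 2 := Real.coe_toNNReal _ hr2.le
  refine ⟨(r / 2).toNNReal, ?_, ENNReal.coe_pos.mpr (Real.toNNReal_pos.mpr hr2), ?_⟩
  · apply le_radius_of_summable
    have habs : Summable fun n ↦ |a n * (r / 2) ^ n| :=
      summable_abs_iff.mpr (ha (r / 2) (by rw [abs_of_pos hr2]; linarith)).summable
    simpa only [ofScalars_norm, Real.norm_eq_abs, hr2_coe, abs_mul, abs_pow, abs_of_pos hr2]
      using habs
  · intro t ht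
    rw [mem_eball_zero_iff, enorm_eq_nnnorm, ENNReal.coe_lt_coe, ← NNReal.coe_lt_coe, coe_nnnorm,
      Real.norm_eq_abs, hr2_coe] at ht
    simpa only [zero_add, ofScalars_apply_eq, smul_eq_mul] using ha t (by linarith)

theorem eq_of_hasSum_mul_pow {a b : ℕ → ℝ} {f : ℝ → ℝ} {r : ℝ} (hr : 0 < r)
    (ha : ∀ t : ℝ, |t| < r → HasSum (fun n ↦ a n * t ^ n) (f t))
    (hb : ∀ t : ℝ, |t| < r → HasSum (fun n ↦ b n * t ^ n) (f t)) : a = b :=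
  ofScalars_series_injective ℝ ℝ
    ((hasFPowerSeriesAt_ofScalars_of_hasSum hr ha).eq_formalMultilinearSeries
      (hasFPowerSeriesAt_ofScalars_of_hasSum hr hb))

theorem eq_of_hasSum_mul_pow_div_factorial {a b : ℕ → ℝ} {f : ℝ → ℝ} {r : ℝ} (hr : 0 < r)
    (ha : ∀ t : ℝ, |t| < r → HasSum (fun n ↦ a n * t ^ n / n !) (f t))
    (hb : ∀ t : ℝ, |t| < r → HasSum (fun n ↦ b n * t ^ n / n !) (f t)) : a = b := by
  have div_factorial (c : ℕ → ℝ) (t : ℝ) (n : ℕ) : c n * t ^ n / n ! = c n / n ! * t ^ n := by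
    ring
  have key := eq_of_hasSum_mul_pow hr (a := fun n ↦ a n / n !) (b := fun n ↦ b n / n !)
    (fun t ht ↦ by simpa only [div_factorial] using ha t ht)
    (fun t ht ↦ by simpa only [div_factorial] using hb t ht)
  funext n
  exact (div_left_inj' (cast_ne_zero.mpr n.factorial_ne_zero)).mp (congrFun key n)

theorem binomial_convolution_mul_pow_div_factorial (a b : ℕ → ℝ) (t : ℝ) (n : ℕ) :
    ∑ k ∈ range (n + 1), a k * t ^ k / k ! * (b (n - k) * t ^ (n - k) / (n - k)!) =
      (∑ k ∈ range (n + 1), (n.choose k : ℝ) * a k * b (n - k)) * t ^ n / n ! := by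
  rw [sum_mul, sum_div]
  refine sum_congr rfl fun k hk ↦ ?_
  have hkn : k ≤ n := Nat.lt_succ_iff.mp (mem_range.mp hk)
  rw [cast_choose ℝ hkn, ← Nat.add_sub_cancel' hkn, pow_add, Nat.add_sub_cancel_left]
  field_simp

theorem HasSum.egf_mul {a b : ℕ → ℝ} {t A B : ℝ}
    (ha : HasSum (fun n ↦ a n * t ^ n / n !) A) (hb : HasSum (fun n ↦ b n * t ^ n / n !) B) :
    HasSum (fun n ↦ (∑ k ∈ range (n + 1), (n.choose k : ℝ) * a k * b (n - k)) * t ^ n / n !)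
      (A * B) := by
  have hprod := hasSum_sum_range_mul_of_summable_norm (f := fun n ↦ a n * t ^ n / n !)
    (g := fun n ↦ b n * t ^ n / n !) ha.summable.norm hb.summable.norm
  rw [ha.tsum_eq, hb.tsum_eq] at hprod
  rwa [funext (binomial_convolution_mul_pow_div_factorial a b t)] at hprod

end

theorem degenerate_bell_binomial_identity_general (l : ℝ)
    (φ : ℕ → ℝ → ℝ)
    (hφ : ∀ x t : ℝ, |l * t| < 1 →
      HasSum (fun n : ℕ => φ n x * t ^ n / (n.factorial : ℝ))
        (Real.exp (x * (degExp l 1 t - 1))))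
    (n : ℕ) (x y : ℝ) :
    φ n (x + y) = ∑ k ∈ Finset.range (n + 1), (n.choose k : ℝ) * φ k x * φ (n - k) y := by
  set r := (|l| + 1)⁻¹
  have hr : 0 < r := by positivity
  have hlt (t : ℝ) (ht : |t| < r) : |l * t| < 1 := calc
    |l * t| = |l| * |t| := abs_mul l t
    _ ≤ |l| * r := by gcongr
    _ < 1 := by rw [mul_inv_lt_iff₀ (by positivity)]; linarith
  have hcoeff := eq_of_hasSum_mul_pow_div_factorial hr (a := fun n ↦ φ n (x + y))
    (b := fun n ↦ ∑ k ∈ Finset.range (n + 1), (n.choose k : ℝ) * φ k x * φ (n - k) y)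
    (fun t ht ↦ hφ (x + y) t (hlt t ht))
    (fun t ht ↦ by
      rw [add_mul, Real.exp_add]
      exact ((hφ x t (hlt t ht)).egf_mul (hφ y t (hlt t ht)) :))
  exact congrFun hcoeff n

theorem degenerate_bell_binomial_identity (l : ℝ) (hl : l ≠ 0)
    (φ : ℕ → ℝ → ℝ)
    (hφ : ∀ x t : ℝ, |l * t| < 1 →
      HasSum (fun n : ℕ => φ n x * t ^ n / (n.factorial : ℝ))
        (Real.exp (x * (degExp l 1 t - 1))))
    (n : ℕ) (x y : ℝ) :
    φ n (x + y) = ∑ k ∈ Finset.range (n + 1), (n.choose k : ℝ) * φ k x * φ (n - k) y :=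
  degenerate_bell_binomial_identity_general l φ hφ n x y
end

section
/- If X₁, ..., Xₙ are independent random variables with Xᵢ ∼ DB_λ(αᵢ, θ) (all with the same parameter θ), then the sum Y = X₁ + ⋯ + Xₙ has the degenerate Bell distribution DB_λ(α₁+⋯+αₙ, θ). -/
/-!
Comparing coefficients of `t` in `exp((x + y) g(t)) = exp(x g(t)) exp(y g(t))`, where
`g(t) = e_λ(t) - 1`, shows that the sequences `k ↦ φ_k(x) / k!` form a convolution semigroup in
`x`: the one for `x + y` is the Cauchy product of those for `x` and `y`, and the one for `0` is
`δ_0`. Multiplying by `e^{-x g(θ)} θ^k`, the same holds for the weights `w_x(k)` of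
`DB_λ(x, θ)`. The law of a sum of independent `ℕ`-valued variables is the convolution of their
laws, so induction on the number of summands gives the result. The convolution step needs
`w_x(k) ≥ 0`; this holds whenever `w_x` is a law, because `∑ w_x(k) = 1` and also
`∑ max (w_x(k)) 0 = 1`.
-/

open Real MeasureTheory ProbabilityTheory Filter Asymptotics

open Finset FormalMultilinearSeries
open scoped NNReal ENNReal

theorem le_ofScalars_radius_of_summable {c : ℕ → ℝ} {r : ℝ≥0}
    (hc : ∀ t : ℝ, |t| < r → Summable fun n => c n * t ^ n) :
    (r : ℝ≥0∞) ≤ (ofScalars ℝ c).radius := by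
  refine ENNReal.le_of_forall_pos_nnreal_lt fun ρ _ hρ => ?_
  have hρr : |(ρ : ℝ)| < r := by rw [NNReal.abs_eq]; exact_mod_cast hρ
  refine (ofScalars ℝ c).le_radius_of_tendsto (l := 0) ?_
  simpa [ofScalars_norm, norm_mul, norm_pow] using (hc ρ hρr).tendsto_atTop_zero.norm

theorem hasFPowerSeriesOnBall_ofScalars_of_hasSum {c : ℕ → ℝ} {f : ℝ → ℝ} {r : ℝ≥0}
    (hr : 0 < r) (hf : ∀ t : ℝ, |t| < r → HasSum (fun n => c n * t ^ n) (f t)) :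
    HasFPowerSeriesOnBall f (ofScalars ℝ c) 0 r where
  r_le := le_ofScalars_radius_of_summable fun t ht => (hf t ht).summable
  r_pos := by exact_mod_cast hr
  hasSum {t} ht := by
    simp only [ofScalars_apply_eq, smul_eq_mul, zero_add]
    exact hf t (by simpa using ht)

theorem coeff_eq_of_hasSum_pow {c d : ℕ → ℝ} {f : ℝ → ℝ} {r : ℝ≥0} (hr : 0 < r)
    (hc : ∀ t : ℝ, |t| < r → HasSum (fun n => c n * t ^ n) (f t))
    (hd : ∀ t : ℝ, |t| < r → HasSum (fun n => d n * t ^ n) (f t)) : c = d :=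
  (ofScalars_series_eq_iff (E := ℝ) c d).mp <|
    (hasFPowerSeriesOnBall_ofScalars_of_hasSum hr hc).hasFPowerSeriesAt.eq_formalMultilinearSeries
      (hasFPowerSeriesOnBall_ofScalars_of_hasSum hr hd).hasFPowerSeriesAt

theorem summable_norm_mul_pow_of_hasSum {c : ℕ → ℝ} {f : ℝ → ℝ} {r : ℝ≥0}
    (hc : ∀ t : ℝ, |t| < r → HasSum (fun n => c n * t ^ n) (f t)) {t : ℝ} (ht : |t| < r) :
    Summable fun n => ‖c n * t ^ n‖ := by
  have hmem : t ∈ Metric.eball (0 : ℝ) (ofScalars ℝ c).radius := by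
    refine Metric.mem_eball.mpr (lt_of_lt_of_le ?_
      (le_ofScalars_radius_of_summable fun t ht => (hc t ht).summable))
    simpa [edist_dist, ENNReal.ofReal_lt_coe_iff (abs_nonneg t)] using ht
  simpa [ofScalars_apply_eq, mul_comm] using (ofScalars ℝ c).summable_norm_apply hmem

theorem hasSum_sum_antidiagonal_mul_pow {c d : ℕ → ℝ} {f g : ℝ → ℝ} {r : ℝ≥0}
    (hc : ∀ t : ℝ, |t| < r → HasSum (fun n => c n * t ^ n) (f t))
    (hd : ∀ t : ℝ, |t| < r → HasSum (fun n => d n * t ^ n) (g t)) {t : ℝ} (ht : |t| < r) :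
    HasSum (fun n => (∑ p ∈ antidiagonal n, c p.1 * d p.2) * t ^ n) (f t * g t) := by
  have hcn := summable_norm_mul_pow_of_hasSum hc ht
  have hdn := summable_norm_mul_pow_of_hasSum hd ht
  have hprod := (summable_norm_sum_mul_antidiagonal_of_summable_norm hcn hdn).of_norm.hasSum
  rw [← tsum_mul_tsum_eq_tsum_sum_antidiagonal_of_summable_norm hcn hdn, (hc t ht).tsum_eq,
    (hd t ht).tsum_eq] at hprod
  have hterm : ∀ n, ∑ p ∈ antidiagonal n, c p.1 * t ^ p.1 * (d p.2 * t ^ p.2) =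
      (∑ p ∈ antidiagonal n, c p.1 * d p.2) * t ^ n := fun n => by
    rw [sum_mul]
    refine sum_congr rfl fun p hp => ?_
    rw [← mem_antidiagonal.mp hp, pow_add]
    ring
  simpa only [hterm] using hprod

section ExpGeneratingFunction

variable {g : ℝ → ℝ} {r : ℝ≥0} {c : ℝ → ℕ → ℝ}

theorem coeff_add_of_hasSum_exp (hr : 0 < r)
    (hc : ∀ x t : ℝ, |t| < r → HasSum (fun n => c x n * t ^ n) (Real.exp (x * g t)))
    (x y : ℝ) :
    c (x + y) = fun n => ∑ p ∈ antidiagonal n, c x p.1 * c y p.2 :=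
  coeff_eq_of_hasSum_pow hr (hc (x + y)) fun t ht => by
    simpa only [add_mul, Real.exp_add] using hasSum_sum_antidiagonal_mul_pow (hc x) (hc y) ht

theorem coeff_zero_of_hasSum_exp (hr : 0 < r)
    (hc : ∀ x t : ℝ, |t| < r → HasSum (fun n => c x n * t ^ n) (Real.exp (x * g t))) :
    c 0 = Pi.single 0 1 :=
  coeff_eq_of_hasSum_pow hr (hc 0) fun t _ => by
    have hterm : (fun n => (Pi.single 0 1 : ℕ → ℝ) n * t ^ n) = Pi.single 0 1 := by
      ext n; rcases n with _ | n <;> simp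
    rw [hterm, zero_mul, Real.exp_zero]
    exact hasSum_pi_single 0 1

end ExpGeneratingFunction

/-- With `g = degExp l 1 - 1` this is the probability mass function of `DB_l(x, θ)`. -/
noncomputable def expWeight (g : ℝ → ℝ) (θ : ℝ) (φ : ℕ → ℝ → ℝ) (x : ℝ) (k : ℕ) :
    ℝ :=
  Real.exp (-(x * g θ)) * θ ^ k * φ k x / k.factorial

section ExpWeight

variable {g : ℝ → ℝ} {θ : ℝ} {φ : ℕ → ℝ → ℝ}

theorem hasSum_expWeight {x : ℝ}
    (hφ : HasSum (fun n => φ n x * θ ^ n / n.factorial) (Real.exp (x * g θ))) :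
    HasSum (expWeight g θ φ x) 1 := by
  have h := hφ.mul_left (Real.exp (-(x * g θ)))
  rw [← Real.exp_add, neg_add_cancel, Real.exp_zero] at h
  have hterm : (fun n => Real.exp (-(x * g θ)) * (φ n x * θ ^ n / n.factorial)) =
      expWeight g θ φ x := by
    ext n; unfold expWeight; ring
  rwa [hterm] at h

variable {r : ℝ≥0}
  (hφ : ∀ x t : ℝ, |t| < r →
    HasSum (fun n => φ n x * t ^ n / n.factorial) (Real.exp (x * g t)))
include hφ

theorem expWeight_add (hr : 0 < r) (x y : ℝ) (k : ℕ) :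
    expWeight g θ φ (x + y) k =
      ∑ p ∈ antidiagonal k, expWeight g θ φ x p.1 * expWeight g θ φ y p.2 := by
  have hcoeff := congrFun (coeff_add_of_hasSum_exp (c := fun x n => φ n x / n.factorial) hr
    (fun x t ht => by simpa only [div_mul_eq_mul_div] using hφ x t ht) x y) k
  rw [expWeight, mul_div_assoc, hcoeff, mul_sum]
  refine sum_congr rfl fun p hp => ?_
  rw [← mem_antidiagonal.mp hp, add_mul, neg_add, Real.exp_add, pow_add]
  unfold expWeight
  ring

theorem expWeight_zero (hr : 0 < r) : expWeight g θ φ 0 = Pi.single 0 1 := by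
  have hcoeff := coeff_zero_of_hasSum_exp (c := fun x n => φ n x / n.factorial) hr
    fun x t ht => by simpa only [div_mul_eq_mul_div] using hφ x t ht
  ext k
  rw [expWeight, zero_mul, neg_zero, Real.exp_zero, one_mul, mul_div_assoc, congrFun hcoeff k]
  rcases k with _ | k <;> simp

end ExpWeight

section Probability

variable {Ω : Type*} [MeasurableSpace Ω] {P : Measure Ω}

theorem measure_add_eq_sum_antidiagonal {A B : Ω → ℕ} (hA : Measurable A) (hB : Measurable B)
    (hAB : IndepFun A B P) (k : ℕ) :
    P {ω | A ω + B ω = k} =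
      ∑ p ∈ antidiagonal k, P {ω | A ω = p.1} * P {ω | B ω = p.2} := by
  have hfiber : {ω | A ω + B ω = k} = (fun ω => (A ω, B ω)) ⁻¹' ↑(antidiagonal k) := by
    ext ω; simp
  rw [hfiber, ← sum_measure_preimage_singleton _ fun p _ =>
    (hA.prodMk hB) (measurableSet_singleton p)]
  refine sum_congr rfl fun p _ => ?_
  calc P ((fun ω => (A ω, B ω)) ⁻¹' {p}) = P (A ⁻¹' {p.1} ∩ B ⁻¹' {p.2}) := by
        congr 1; ext ω; simp [Prod.ext_iff]
    _ = _ := hAB.measure_inter_preimage_eq_mul _ _ (measurableSet_singleton _)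
        (measurableSet_singleton _)

theorem nonneg_of_measure_eq_ofReal [IsProbabilityMeasure P] {Y : Ω → ℕ} (hY : Measurable Y)
    {w : ℕ → ℝ} (hw : HasSum w 1) (hPY : ∀ k, P {ω | Y ω = k} = ENNReal.ofReal (w k))
    (k : ℕ) :
    0 ≤ w k := by
  have hmass : ∑' k, ENNReal.ofReal (w k) = 1 := by
    simp_rw [← hPY]
    change ∑' k, P (Y ⁻¹' {k}) = 1
    rw [← measure_iUnion (pairwise_disjoint_fiber Y) fun k => hY (measurableSet_singleton k),
      ← Set.preimage_iUnion, Set.iUnion_of_singleton, Set.preimage_univ, measure_univ]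
  have hpos : HasSum (fun k => max (w k) 0) 1 := by
    have h := ENNReal.hasSum_toReal (hmass ▸ ENNReal.one_ne_top)
    rwa [← ENNReal.tsum_toReal_eq fun _ => ENNReal.ofReal_ne_top, hmass, ENNReal.toReal_one] at h
  by_contra hneg
  exact lt_irrefl _ (hasSum_lt (fun j => le_max_left (w j) 0)
    (by simpa using not_le.mp hneg) hw hpos)

theorem measure_sum_eq_ofReal_of_convolution [IsProbabilityMeasure P] {ι M : Type*}
    [AddCommMonoid M] {w : M → ℕ → ℝ} (hw_sum : ∀ x, HasSum (w x) 1)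
    (hw_zero : w 0 = Pi.single 0 1)
    (hw_add : ∀ x y k, w (x + y) k = ∑ p ∈ antidiagonal k, w x p.1 * w y p.2)
    {X : ι → Ω → ℕ} (hXm : ∀ i, Measurable (X i)) (hindep : iIndepFun X P) {α : ι → M}
    (hX : ∀ i k, P {ω | X i ω = k} = ENNReal.ofReal (w (α i) k)) (s : Finset ι) (k : ℕ) :
    P {ω | ∑ i ∈ s, X i ω = k} = ENNReal.ofReal (w (∑ i ∈ s, α i) k) := by
  classical
  induction s using Finset.induction_on generalizing k with
  | empty =>
    rw [sum_empty, hw_zero]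
    rcases k with _ | k <;> simp
  | insert i s hi ih =>
    have hmeas : Measurable fun ω => ∑ j ∈ s, X j ω :=
      Finset.measurable_sum s fun j _ => hXm j
    have hind : IndepFun (X i) (fun ω => ∑ j ∈ s, X j ω) P := by
      rw [← Finset.sum_fn]
      exact (hindep.indepFun_finsetSum_of_notMem hXm hi).symm
    have hwi := nonneg_of_measure_eq_ofReal (hXm i) (hw_sum _) (hX i)
    have hws := nonneg_of_measure_eq_ofReal hmeas (hw_sum _) ih
    simp_rw [sum_insert hi]
    rw [measure_add_eq_sum_antidiagonal (hXm i) hmeas hind, hw_add,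
      ENNReal.ofReal_sum_of_nonneg fun p _ => mul_nonneg (hwi _) (hws _)]
    refine sum_congr rfl fun p _ => ?_
    rw [hX, ih, ENNReal.ofReal_mul (hwi _)]

end Probability

theorem degenerate_bell_sum_of_family_general (l θ : ℝ) (hl : l ∈ Set.Ioc (0 : ℝ) 1) (hθ : 0 < θ)
    (φ : ℕ → ℝ → ℝ)
    (hφ : ∀ x t : ℝ, 0 < 1 + l * t →
      HasSum (fun n : ℕ => φ n x * t ^ n / (n.factorial : ℝ))
        (Real.exp (x * (degExp l 1 t - 1))))
    {Ω : Type*} [MeasurableSpace Ω] (P : Measure Ω) [IsProbabilityMeasure P]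
    (n : ℕ) (α : Fin n → ℝ)
    (X : Fin n → Ω → ℕ) (hXmeas : ∀ i, Measurable (X i))
    (hindep : iIndepFun X P)
    (hX : ∀ i, ∀ k : ℕ, P {ω | X i ω = k} =
      ENNReal.ofReal (Real.exp (-(α i * (degExp l 1 θ - 1))) * θ ^ k * φ k (α i) / (k.factorial : ℝ))) :
    ∀ k : ℕ, P {ω | (∑ i, X i ω) = k} =
      ENNReal.ofReal (Real.exp (-((∑ i, α i) * (degExp l 1 θ - 1))) * θ ^ k *
        φ k (∑ i, α i) / (k.factorial : ℝ)) := by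
  obtain ⟨hl0, hl1⟩ := hl
  have hφ_ball : ∀ x t : ℝ, |t| < (1 : ℝ≥0) →
      HasSum (fun n => φ n x * t ^ n / n.factorial) (Real.exp (x * (degExp l 1 t - 1))) := by
    intro x t ht
    refine hφ x t ?_
    have hlt : l * |t| < 1 := by
      calc l * |t| < l * 1 := by gcongr; exact_mod_cast ht
        _ ≤ 1 := by linarith
    nlinarith [neg_abs_le t]
  exact measure_sum_eq_ofReal_of_convolution
    (w := expWeight (fun t => degExp l 1 t - 1) θ φ)
    (fun x => hasSum_expWeight (hφ x θ (by positivity)))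
    (expWeight_zero hφ_ball one_pos) (expWeight_add hφ_ball one_pos) hXmeas hindep hX univ

theorem degenerate_bell_sum_of_family (l θ : ℝ) (hl : l ∈ Set.Ioc (0 : ℝ) 1) (hθ : 0 < θ)
    (φ : ℕ → ℝ → ℝ)
    (hφ : ∀ x t : ℝ, 0 < 1 + l * t →
      HasSum (fun n : ℕ => φ n x * t ^ n / (n.factorial : ℝ))
        (Real.exp (x * (degExp l 1 t - 1))))
    {Ω : Type*} [MeasurableSpace Ω] (P : Measure Ω) [IsProbabilityMeasure P]
    (n : ℕ) (α : Fin n → ℝ) (hα : ∀ i, 0 < α i)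
    (X : Fin n → Ω → ℕ) (hXmeas : ∀ i, Measurable (X i))
    (hindep : iIndepFun X P)
    (hX : ∀ i, ∀ k : ℕ, P {ω | X i ω = k} =
      ENNReal.ofReal (Real.exp (-(α i * (degExp l 1 θ - 1))) * θ ^ k * φ k (α i) / (k.factorial : ℝ))) :
    ∀ k : ℕ, P {ω | (∑ i, X i ω) = k} =
      ENNReal.ofReal (Real.exp (-((∑ i, α i) * (degExp l 1 θ - 1))) * θ ^ k *
        φ k (∑ i, α i) / (k.factorial : ℝ)) :=
  degenerate_bell_sum_of_family_general l θ hl hθ φ hφ P n α X hXmeas hindep hX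
end

section
/- If X ∼ DB_λ(α,θ), then its moment generating function is F_X(t) = E[e^{tX}] = exp(α(e_λ(e^t θ) − e_λ(θ))). -/
/-!
The pmf is `c θ^k φ_k(α) / k!` with `c = exp (-α (e_λ(θ) - 1))`, so weighting it by `e^{tk}`
replaces `θ` by `e^t θ`, and the generating function `∑ φ_k(x) u^k / k! = exp (x (e_λ(u) - 1))`
sums the weighted series to `exp (α (e_λ(e^t θ) - e_λ(θ)))`. At `t = 0` this says the real
weights sum to `1`; since their positive parts carry the total mass `1` of `P`, the weights are
nonnegative and are the actual probabilities `P {X = k}`, so the series is the expectation.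
-/

open Real MeasureTheory ProbabilityTheory Filter Asymptotics

theorem nonneg_of_hasSum_of_tsum_ofReal {ι : Type*} {p : ι → ℝ} {a : ℝ} (ha : 0 ≤ a)
    (hp : HasSum p a) (h : ∑' i, ENNReal.ofReal (p i) = ENNReal.ofReal a) (i : ι) : 0 ≤ p i := by
  set q : ι → ℝ := fun i => max (p i) 0 with hq_def
  have hq0 : ∀ i, 0 ≤ q i := fun i => le_max_right _ _
  have hq : Summable q := hp.summable.abs.of_nonneg_of_le hq0
    fun i => max_le (le_abs_self _) (abs_nonneg _)
  have hq_sum : ∑' i, q i = a := by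
    rw [← ENNReal.ofReal_eq_ofReal_iff (tsum_nonneg hq0) ha, ENNReal.ofReal_tsum_of_nonneg hq0 hq,
      ← h]
    simp [hq_def, ENNReal.ofReal_max]
  have hdiff_sum : HasSum (q - p) 0 := by
    have hsub := hq.hasSum.sub hp
    rwa [hq_sum, sub_self] at hsub
  have hdiff : q - p = 0 :=
    (hasSum_zero_iff_of_nonneg fun i => sub_nonneg.2 (le_max_left _ _)).1 hdiff_sum
  simpa [sub_eq_zero.1 (congrFun hdiff i)] using hq0 i

theorem tsum_measure_preimage_singleton_eq_one {Ω β : Type*} [MeasurableSpace Ω]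
    [MeasurableSpace β] [Countable β] [MeasurableSingletonClass β]
    (P : Measure Ω) [IsProbabilityMeasure P] {X : Ω → β} (hX : Measurable X) :
    ∑' b, P (X ⁻¹' {b}) = 1 := by
  rw [← tsum_univ, tsum_measure_preimage_singleton Set.countable_univ
    (fun b _ => hX (measurableSet_singleton b)), Set.preimage_univ, measure_univ]

theorem integral_comp_eq_tsum {Ω β : Type*} [MeasurableSpace Ω]
    [MeasurableSpace β] [Countable β] [MeasurableSingletonClass β]
    {P : Measure Ω} {X : Ω → β} (hX : Measurable X) {p : β → ℝ} (hp0 : ∀ b, 0 ≤ p b)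
    (hp : ∀ b, P (X ⁻¹' {b}) = ENNReal.ofReal (p b)) {g : β → ℝ}
    (hg : Summable fun b => ‖g b‖ * p b) :
    ∫ ω, g (X ω) ∂P = ∑' b, g b * p b := by
  have hmap : ∀ b, P.map X {b} = ENNReal.ofReal (p b) := fun b => by
    rw [Measure.map_apply hX (measurableSet_singleton b), hp]
  have hg_meas : AEStronglyMeasurable g (P.map X) :=
    (measurable_of_countable g).aestronglyMeasurable
  have hg_int : Integrable g (P.map X) := by
    refine ⟨hg_meas, ?_⟩
    rw [HasFiniteIntegral, lintegral_countable']
    simp_rw [hmap, ← ofReal_norm, ← ENNReal.ofReal_mul (norm_nonneg _)]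
    rw [← ENNReal.ofReal_tsum_of_nonneg (fun b => mul_nonneg (norm_nonneg _) (hp0 b)) hg]
    exact ENNReal.ofReal_lt_top
  rw [← integral_map hX.aemeasurable hg_meas, integral_countable hg_int]
  refine tsum_congr fun b => ?_
  rw [measureReal_def, hmap, ENNReal.toReal_ofReal (hp0 b), smul_eq_mul, mul_comm]

noncomputable def degBellProb (l α θ : ℝ) (φ : ℕ → ℝ → ℝ) (k : ℕ) : ℝ :=
  Real.exp (-(α * (degExp l 1 θ - 1))) * θ ^ k * φ k α / (k.factorial : ℝ)

theorem hasSum_exp_mul_degBellProb {l α θ t : ℝ} {φ : ℕ → ℝ → ℝ}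
    (hφ : HasSum (fun n : ℕ => φ n α * (Real.exp t * θ) ^ n / (n.factorial : ℝ))
      (Real.exp (α * (degExp l 1 (Real.exp t * θ) - 1)))) :
    HasSum (fun k : ℕ => Real.exp (t * k) * degBellProb l α θ φ k)
      (Real.exp (α * (degExp l 1 (Real.exp t * θ) - degExp l 1 θ))) := by
  have hsum : Real.exp (α * (degExp l 1 (Real.exp t * θ) - degExp l 1 θ)) =
      Real.exp (-(α * (degExp l 1 θ - 1))) * Real.exp (α * (degExp l 1 (Real.exp t * θ) - 1)) := by
    rw [← Real.exp_add]
    ring_nf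
  rw [hsum]
  refine (hφ.mul_left (Real.exp (-(α * (degExp l 1 θ - 1))))).congr_fun fun k => ?_
  rw [degBellProb, mul_comm t, Real.exp_nat_mul]
  ring

theorem hasSum_degBellProb {l α θ : ℝ} {φ : ℕ → ℝ → ℝ}
    (hφ : HasSum (fun n : ℕ => φ n α * θ ^ n / (n.factorial : ℝ))
      (Real.exp (α * (degExp l 1 θ - 1)))) :
    HasSum (degBellProb l α θ φ) 1 := by
  simpa using hasSum_exp_mul_degBellProb (t := 0) (by simpa using hφ)

theorem degenerate_bell_mgf_general (l α θ : ℝ) (hl : l ∈ Set.Ioc (0 : ℝ) 1) (hθ : 0 < θ)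
    (φ : ℕ → ℝ → ℝ)
    (hφ : ∀ x t : ℝ, 0 < 1 + l * t →
      HasSum (fun n : ℕ => φ n x * t ^ n / (n.factorial : ℝ))
        (Real.exp (x * (degExp l 1 t - 1))))
    {Ω : Type*} [MeasurableSpace Ω] (P : Measure Ω) [IsProbabilityMeasure P]
    (X : Ω → ℕ) (hXmeas : Measurable X)
    (hX : ∀ k : ℕ, P {ω | X ω = k} =
      ENNReal.ofReal (Real.exp (-(α * (degExp l 1 θ - 1))) * θ ^ k * φ k α / (k.factorial : ℝ))) :
    ∀ t : ℝ, ∫ ω, Real.exp (t * (X ω : ℝ)) ∂P =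
      Real.exp (α * (degExp l 1 (Real.exp t * θ) - degExp l 1 θ)) := by
  intro t
  have hl0 := hl.1
  have hmgf := hasSum_exp_mul_degBellProb (hφ α (Real.exp t * θ) (by positivity))
  have hmass := hasSum_degBellProb (hφ α θ (by positivity))
  have hnonneg : ∀ k, 0 ≤ degBellProb l α θ φ k :=
    nonneg_of_hasSum_of_tsum_ofReal zero_le_one hmass <| by
      rw [ENNReal.ofReal_one, ← tsum_measure_preimage_singleton_eq_one P hXmeas]
      exact tsum_congr fun k => (hX k).symm
  have hsummable : Summable fun k : ℕ => ‖Real.exp (t * k)‖ * degBellProb l α θ φ k := by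
    simpa only [Real.norm_of_nonneg (Real.exp_pos _).le] using hmgf.summable
  rw [integral_comp_eq_tsum hXmeas hnonneg hX hsummable, hmgf.tsum_eq]

theorem degenerate_bell_mgf (l α θ : ℝ) (hl : l ∈ Set.Ioc (0 : ℝ) 1) (hα : 0 < α) (hθ : 0 < θ)
    (φ : ℕ → ℝ → ℝ)
    (hφ : ∀ x t : ℝ, 0 < 1 + l * t →
      HasSum (fun n : ℕ => φ n x * t ^ n / (n.factorial : ℝ))
        (Real.exp (x * (degExp l 1 t - 1))))
    {Ω : Type*} [MeasurableSpace Ω] (P : Measure Ω) [IsProbabilityMeasure P]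
    (X : Ω → ℕ) (hXmeas : Measurable X)
    (hX : ∀ k : ℕ, P {ω | X ω = k} =
      ENNReal.ofReal (Real.exp (-(α * (degExp l 1 θ - 1))) * θ ^ k * φ k α / (k.factorial : ℝ))) :
    ∀ t : ℝ, ∫ ω, Real.exp (t * (X ω : ℝ)) ∂P =
      Real.exp (α * (degExp l 1 (Real.exp t * θ) - degExp l 1 θ)) :=
  degenerate_bell_mgf_general l α θ hl hθ φ hφ P X hXmeas hX
end

section
/- If X ∼ DB_λ(α,θ), then E[X] = θα e_λ^{1−λ}(θ), where e_λ^{x}(θ) = (1+λθ)^{x/λ}. -/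
open Real MeasureTheory ProbabilityTheory Filter Asymptotics

/-!
Write `F t = exp (α (e_λ(t) - 1)) = ∑ φ_k(α) t^k / k!`; this power series converges on all of
`(-1/λ, ∞)`, and the probabilities are `p_k = φ_k(α) θ^k / (k! F θ)`. Differentiating termwise,
`E[X] = ∑ k p_k = θ F'(θ) / F(θ)`, and `e_λ' = e_λ^{1-λ}` gives `F'(θ) = α e_λ^{1-λ}(θ) F(θ)`.

Since `ENNReal.ofReal` clips negative values, `p_k ≥ 0` has to be derived: `∑ max(p_k, 0)` is the
total mass `1` of `P`, which is also `∑ p_k`, so no `p_k` is negative.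
-/

open Topology

section PowerSeries

variable {a : ℕ → ℝ} {r θ : ℝ}

lemma norm_mul_natCast_mul_pow_pred_le {C ρ y : ℝ} (hρ : 0 < ρ) (hr : ρ < |r|)
    (hC : ∀ n, ‖a n * r ^ n‖ ≤ C) (hy : ‖y‖ < ρ) (n : ℕ) :
    ‖a n * (n * y ^ (n - 1))‖ ≤ C / ρ * (n * (ρ / |r|) ^ n) := by
  rcases n.eq_zero_or_pos with rfl | hn
  · simp
  have hr0 : 0 < |r| := hρ.trans hr
  have ha : ‖a n‖ ≤ C / |r| ^ n := by
    rw [le_div_iff₀ (by positivity)]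
    simpa [norm_mul, norm_pow] using hC n
  calc ‖a n * (n * y ^ (n - 1))‖ = ‖a n‖ * (n * ‖y‖ ^ (n - 1)) := by
        simp [norm_mul, norm_pow]
    _ ≤ C / |r| ^ n * (n * ρ ^ (n - 1)) := by
        gcongr
        · exact (norm_nonneg _).trans ha
    _ = C / ρ * (n * (ρ / |r|) ^ n) := by
        rw [div_pow, ← pow_sub_one_mul hn.ne' ρ]
        field_simp

theorem hasDerivAt_tsum_mul_pow (hr : Summable fun n => a n * r ^ n) (hθ : |θ| < |r|) :
    Summable (fun n => a n * (n * θ ^ (n - 1))) ∧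
      HasDerivAt (fun t => ∑' n, a n * t ^ n) (∑' n, a n * (n * θ ^ (n - 1))) θ := by
  obtain ⟨C, hC⟩ : ∃ C, ∀ n, ‖a n * r ^ n‖ ≤ C := by
    obtain ⟨C, hC⟩ := hr.tendsto_atTop_zero.norm.bddAbove_range
    exact ⟨C, fun n => hC ⟨n, rfl⟩⟩
  obtain ⟨ρ, hθρ, hρr⟩ := exists_between hθ
  rw [← Real.norm_eq_abs] at hθρ
  have hρ : 0 < ρ := (norm_nonneg θ).trans_lt hθρ
  have hbound (y : ℝ) (hy : ‖y‖ < ρ) (n : ℕ) :=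
    norm_mul_natCast_mul_pow_pred_le hρ hρr hC hy n
  have hu : Summable fun n : ℕ => C / ρ * (n * (ρ / |r|) ^ n) := by
    refine .mul_left _ ?_
    simpa using summable_pow_mul_geometric_of_norm_lt_one 1
      (show ‖ρ / |r|‖ < 1 by
        rw [Real.norm_of_nonneg (by positivity), div_lt_one (hρ.trans hρr)]; exact hρr)
  have hθmem : θ ∈ Metric.ball (0 : ℝ) ρ := by simpa using hθρ
  refine ⟨.of_norm_bounded hu fun n => hbound θ hθρ n, ?_⟩
  refine hasDerivAt_tsum_of_isPreconnected hu Metric.isOpen_ball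
    (convex_ball 0 ρ).isPreconnected (fun n y _ => (hasDerivAt_pow n y).const_mul (a n))
    (fun n y hy => hbound y (by simpa using hy) n) (y₀ := 0) (by simpa using hρ) ?_ hθmem
  exact summable_of_ne_finset_zero (s := {0}) fun n hn => by simp_all

theorem hasSum_natCast_mul_mul_pow_of_hasDerivAt {f : ℝ → ℝ} {f' : ℝ}
    (hr : Summable fun n => a n * r ^ n) (hθ : |θ| < |r|)
    (hf : ∀ᶠ t in 𝓝 θ, ∑' n, a n * t ^ n = f t) (hf' : HasDerivAt f f' θ) :
    HasSum (fun n : ℕ => n * (a n * θ ^ n)) (θ * f') := by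
  obtain ⟨hsum, hderiv⟩ := hasDerivAt_tsum_mul_pow hr hθ
  rw [← (hderiv.congr_of_eventuallyEq (hf.mono fun _ h => h.symm)).unique hf']
  refine (hsum.hasSum.mul_left θ).congr_fun fun n => ?_
  rcases n.eq_zero_or_pos with rfl | hn
  · simp
  · rw [← pow_sub_one_mul hn.ne' θ]
    ring

end PowerSeries

theorem hasDerivAt_degExp {l x t : ℝ} (hl : l ≠ 0) (ht : 0 < 1 + l * t) :
    HasDerivAt (degExp l x) (x * degExp l (x - l) t) t := by
  have h := (Real.hasDerivAt_rpow_const (p := x / l) (Or.inl ht.ne')).comp t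
    (((hasDerivAt_id t).const_mul l).const_add 1)
  rwa [show x * degExp l (x - l) t = x / l * (1 + l * t) ^ (x / l - 1) * (l * 1) by
    rw [degExp, sub_div, div_self hl]; field_simp]

theorem hasDerivAt_exp_mul_degExp_sub_one {l x t : ℝ} (hl : l ≠ 0) (ht : 0 < 1 + l * t) :
    HasDerivAt (fun t => Real.exp (x * (degExp l 1 t - 1)))
      (x * degExp l (1 - l) t * Real.exp (x * (degExp l 1 t - 1))) t := by
  convert (((hasDerivAt_degExp hl ht).sub_const 1).const_mul x).exp using 1
  ring

lemma nonneg_of_hasSum_of_tsum_ofReal_s11 {c : ℕ → ℝ} {s : ℝ} (hc : HasSum c s) (hs : 0 ≤ s)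
    (h : ∑' k, ENNReal.ofReal (c k) = ENNReal.ofReal s) (k : ℕ) : 0 ≤ c k := by
  have hpos : HasSum (fun k => max (c k) 0) s := by
    have hfin : ∑' k, ENNReal.ofReal (c k) ≠ ⊤ := h ▸ ENNReal.ofReal_ne_top
    have := (ENNReal.summable_toReal hfin).hasSum
    rwa [← ENNReal.tsum_toReal_eq fun _ => ENNReal.ofReal_ne_top, h,
      ENNReal.toReal_ofReal hs] at this
  by_contra! hk
  exact lt_irrefl s <| hasSum_lt (fun k => le_max_left _ _)
    (by simpa [max_eq_right hk.le] using hk) hc hpos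

lemma tsum_measure_setOf_eq {Ω : Type*} [MeasurableSpace Ω] (P : Measure Ω) {X : Ω → ℕ}
    (hX : Measurable X) : ∑' k, P {ω | X ω = k} = P Set.univ := by
  rw [← Set.preimage_univ (f := X), ← tsum_measure_preimage_singleton Set.countable_univ
    fun k _ => hX (measurableSet_singleton k)]
  exact (tsum_univ (f := fun k => P (X ⁻¹' {k}))).symm

lemma integral_natCast_eq_of_hasSum {Ω : Type*} [MeasurableSpace Ω] {P : Measure Ω}
    {X : Ω → ℕ} (hX : Measurable X) {p : ℕ → ℝ} (hp : ∀ k, 0 ≤ p k)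
    (hP : ∀ k, P {ω | X ω = k} = ENNReal.ofReal (p k)) {m : ℝ}
    (hm : HasSum (fun k : ℕ => k * p k) m) :
    ∫ ω, (X ω : ℝ) ∂P = m := by
  have hmap (k : ℕ) : P.map X {k} = ENNReal.ofReal (p k) := by
    rw [Measure.map_apply hX (measurableSet_singleton k)]
    exact hP k
  have hint : Integrable (fun n : ℕ => (n : ℝ)) (P.map X) := by
    refine ⟨measurable_from_top.aestronglyMeasurable, ?_⟩
    rw [HasFiniteIntegral, lintegral_countable']
    simp_rw [hmap, Real.enorm_natCast, ← ENNReal.ofReal_natCast,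
      ← ENNReal.ofReal_mul (Nat.cast_nonneg _)]
    rw [← ENNReal.ofReal_tsum_of_nonneg (fun k => mul_nonneg k.cast_nonneg (hp k)) hm.summable]
    exact ENNReal.ofReal_lt_top
  rw [← integral_map hX.aemeasurable measurable_from_top.aestronglyMeasurable,
    integral_countable hint, ← hm.tsum_eq]
  simp_rw [Measure.real, hmap, ENNReal.toReal_ofReal (hp _), smul_eq_mul, mul_comm]

theorem degenerate_bell_expectation_general (l α θ : ℝ) (hl : l ∈ Set.Ioc (0 : ℝ) 1) (hθ : 0 < θ)
    (φ : ℕ → ℝ → ℝ)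
    (hφ : ∀ x t : ℝ, 0 < 1 + l * t →
      HasSum (fun n : ℕ => φ n x * t ^ n / (n.factorial : ℝ))
        (Real.exp (x * (degExp l 1 t - 1))))
    {Ω : Type*} [MeasurableSpace Ω] (P : Measure Ω) [IsProbabilityMeasure P]
    (X : Ω → ℕ) (hXmeas : Measurable X)
    (hX : ∀ k : ℕ, P {ω | X ω = k} =
      ENNReal.ofReal (Real.exp (-(α * (degExp l 1 θ - 1))) * θ ^ k * φ k α / (k.factorial : ℝ))) :
    ∫ ω, (X ω : ℝ) ∂P = θ * α * degExp l (1 - l) θ := by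
  have hpos {t : ℝ} (ht : 0 ≤ t) : 0 < 1 + l * t := by have := hl.1; positivity
  set F : ℝ → ℝ := fun t => Real.exp (α * (degExp l 1 t - 1))
  set a : ℕ → ℝ := fun n => φ n α / n.factorial
  set p : ℕ → ℝ := fun k => (F θ)⁻¹ * (a k * θ ^ k)
  have hF0 : F θ ≠ 0 := (Real.exp_pos _).ne'
  have hgen {t : ℝ} (ht : 0 < 1 + l * t) : HasSum (fun n => a n * t ^ n) (F t) :=
    (hφ α t ht).congr_fun fun n => by ring
  have hP_eq (k : ℕ) : P {ω | X ω = k} = ENNReal.ofReal (p k) := by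
    rw [hX k, Real.exp_neg]
    congr 1
    simp only [p, a, F]
    ring
  have hp_sum : HasSum p 1 := by
    simpa [p, inv_mul_cancel₀ hF0] using (hgen (hpos hθ.le)).mul_left (F θ)⁻¹
  have hp_nonneg : ∀ k, 0 ≤ p k := nonneg_of_hasSum_of_tsum_ofReal_s11 hp_sum zero_le_one <| by
    simp_rw [← hP_eq, tsum_measure_setOf_eq P hXmeas, measure_univ, ENNReal.ofReal_one]
  have hθF' : HasSum (fun k : ℕ => k * (a k * θ ^ k)) (θ * (α * degExp l (1 - l) θ * F θ)) := by
    refine hasSum_natCast_mul_mul_pow_of_hasDerivAt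
      (hgen (hpos (by positivity : 0 ≤ θ + 1))).summable
      (by rw [abs_of_pos hθ, abs_of_pos (by positivity)]; linarith) ?_
      (hasDerivAt_exp_mul_degExp_sub_one hl.1.ne' (hpos hθ.le))
    filter_upwards [lt_mem_nhds hθ] with t ht
    exact (hgen (hpos ht.le)).tsum_eq
  have hmean : HasSum (fun k : ℕ => k * p k) (θ * α * degExp l (1 - l) θ) := by
    rw [show θ * α * degExp l (1 - l) θ = (F θ)⁻¹ * (θ * (α * degExp l (1 - l) θ * F θ)) by
      field_simp]
    exact (hθF'.mul_left (F θ)⁻¹).congr_fun fun k => by simp only [p]; ring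
  exact integral_natCast_eq_of_hasSum hXmeas hp_nonneg hP_eq hmean

theorem degenerate_bell_expectation (l α θ : ℝ) (hl : l ∈ Set.Ioc (0 : ℝ) 1) (hα : 0 < α) (hθ : 0 < θ)
    (φ : ℕ → ℝ → ℝ)
    (hφ : ∀ x t : ℝ, 0 < 1 + l * t →
      HasSum (fun n : ℕ => φ n x * t ^ n / (n.factorial : ℝ))
        (Real.exp (x * (degExp l 1 t - 1))))
    {Ω : Type*} [MeasurableSpace Ω] (P : Measure Ω) [IsProbabilityMeasure P]
    (X : Ω → ℕ) (hXmeas : Measurable X)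
    (hX : ∀ k : ℕ, P {ω | X ω = k} =
      ENNReal.ofReal (Real.exp (-(α * (degExp l 1 θ - 1))) * θ ^ k * φ k α / (k.factorial : ℝ))) :
    ∫ ω, (X ω : ℝ) ∂P = θ * α * degExp l (1 - l) θ :=
  degenerate_bell_expectation_general l α θ hl hθ φ hφ P X hXmeas hX
end

section
/- Let g(t) = E[exp(−x N_λ(t))] for a degenerate Bell process with parameters (α,θ), where x > 0. Then g satisfies the differential equation g'(t) = α(e_λ(e^{-x}θ) − e_λ(θ)) g(t) with g(0)=1, and hence g(t) = exp(αt(e_λ(e^{-x}θ) − e_λ(θ))). -/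
open Real MeasureTheory ProbabilityTheory Filter Asymptotics

/-! By independence and stationarity of the increments, `G t = E[r ^ N t]` (here `r = e^{-x}`)
satisfies `G (t + s) = G t * G s`, so it equals `exp (c t)` once it has a right derivative `c`
at `0`. The small-time probabilities `P(N s = k) ≈ s α (1)_{k,λ} θ^k / k!` are nonnegative, which
forces every `(1)_{k,λ} ≥ 0` and hence `1/λ = m ∈ ℕ`; then these rates vanish for `k > m`. Cutting
`[0, 1]` into `⌊1/s⌋` independent steps bounds `P(N s ≥ K)` by `2 s (-log P(N 1 < K))`, which makes
`P(N s > m) = o(s)`, so `G s = 1 + s ∑_{k ≤ m} (r^k - 1) α (1)_{k,λ} θ^k / k! + o(s)`. By the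
binomial theorem that sum is `α (e_λ(rθ) - e_λ(θ))`. -/

open Topology Finset

noncomputable def bellJumpRate (l α θ : ℝ) (k : ℕ) : ℝ := α * dFall l 1 k * θ ^ k / k.factorial

lemma exists_nat_mul_eq_one_of_forall_dFall_nonneg {l : ℝ} (hl : 0 < l)
    (h : ∀ k, 0 ≤ dFall l 1 k) : ∃ m : ℕ, (m : ℝ) * l = 1 := by
  set m := ⌊1 / l⌋₊
  have hm_le : (m : ℝ) * l ≤ 1 := by
    rw [← le_div_iff₀ hl]; exact Nat.floor_le (by positivity)
  have hm_lt : 1 < ((m + 1 : ℕ) : ℝ) * l := by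
    rw [← div_lt_iff₀ hl]; push_cast; exact Nat.lt_floor_add_one _
  -- if `m λ < 1`, every factor of `(1)_{m+2,λ}` is positive except the last one, `1 - (m+1) λ`
  refine ⟨m, hm_le.antisymm (not_lt.1 fun hlt => ?_)⟩
  have hpos : 0 < dFall l 1 (m + 1) := by
    refine prod_pos fun i hi => ?_
    have : (i : ℝ) ≤ m := by exact_mod_cast Nat.lt_succ_iff.1 (mem_range.1 hi)
    nlinarith
  have hneg : dFall l 1 (m + 2) < 0 := by
    rw [dFall, prod_range_succ]
    exact mul_neg_of_pos_of_neg hpos (by linarith)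
  exact (h (m + 2)).not_gt hneg

lemma dFall_one_eq_descFactorial {l : ℝ} {m : ℕ} (hm : (m : ℝ) * l = 1) (k : ℕ) :
    dFall l 1 k = m.descFactorial k * l ^ k := by
  have hfactor : ∀ i ∈ range k, 1 - i * l = (m - i) * l := fun i _ => by rw [← hm]; ring
  rw [dFall, prod_congr rfl hfactor, prod_mul_distrib, prod_const, card_range,
    ← descPochhammer_eval_eq_prod_range, descPochhammer_eval_eq_descFactorial]

lemma dFall_one_eq_zero {l : ℝ} {m : ℕ} (hm : (m : ℝ) * l = 1) {k : ℕ} (hk : m < k) :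
    dFall l 1 k = 0 := by
  rw [dFall_one_eq_descFactorial hm, Nat.descFactorial_eq_zero_iff_lt.2 hk]; simp

lemma sum_dFall_one_mul_pow_div_factorial {l : ℝ} {m : ℕ} (hm : (m : ℝ) * l = 1) (u : ℝ) :
    ∑ k ∈ range (m + 1), dFall l 1 k * u ^ k / k.factorial = (1 + l * u) ^ m := by
  rw [add_comm (1 : ℝ), add_pow]
  refine sum_congr rfl fun k _ => ?_
  rw [dFall_one_eq_descFactorial hm, Nat.descFactorial_eq_factorial_mul_choose]
  push_cast
  field_simp
  ring

lemma degExp_one_eq_pow {l : ℝ} {m : ℕ} (hm : (m : ℝ) * l = 1) (u : ℝ) :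
    degExp l 1 u = (1 + l * u) ^ m := by
  rw [degExp, ← rpow_natCast, eq_one_div_of_mul_eq_one_left hm]

lemma exists_nat_mul_eq_one_of_bellJumpRate_nonneg {l α θ : ℝ} (hl : 0 < l) (hα : 0 < α)
    (hθ : 0 < θ) (h : ∀ k, 1 ≤ k → 0 ≤ bellJumpRate l α θ k) : ∃ m : ℕ, (m : ℝ) * l = 1 := by
  refine exists_nat_mul_eq_one_of_forall_dFall_nonneg hl fun k => ?_
  rcases k.eq_zero_or_pos with rfl | hk
  · simp [dFall]
  refine nonneg_of_mul_nonneg_left (b := α * θ ^ k / k.factorial) ?_ (by positivity)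
  calc 0 ≤ bellJumpRate l α θ k := h k hk
    _ = _ := by rw [bellJumpRate]; ring

lemma sum_range_pow_sub_one_mul_bellJumpRate {l : ℝ} {m : ℕ} (hm : (m : ℝ) * l = 1)
    (α θ r : ℝ) :
    ∑ k ∈ range (m + 1), (r ^ k - 1) * bellJumpRate l α θ k =
      α * (degExp l 1 (r * θ) - degExp l 1 θ) := by
  rw [degExp_one_eq_pow hm, degExp_one_eq_pow hm, ← sum_dFall_one_mul_pow_div_factorial hm,
    ← sum_dFall_one_mul_pow_div_factorial hm, ← sum_sub_distrib, mul_sum]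
  refine sum_congr rfl fun k _ => ?_
  rw [bellJumpRate, mul_pow]
  ring

lemma nonneg_of_isLittleO_sub_mul {f : ℝ → ℝ} {c : ℝ} (hf : ∀ s, 0 ≤ f s)
    (h : (fun s => f s - c * s) =o[𝓝[>] 0] fun s => s) : 0 ≤ c := by
  by_contra! hc
  obtain ⟨s, hs, hs0⟩ := ((h.def (by linarith : (0 : ℝ) < -c / 2)).and self_mem_nhdsWithin).exists
  rw [Real.norm_eq_abs, Real.norm_eq_abs, abs_of_pos (hs0 : (0 : ℝ) < s)] at hs
  nlinarith [(abs_le.1 hs).2, hf s, (hs0 : (0 : ℝ) < s)]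

lemma apply_natCast_mul_eq_pow_of_add_eq_mul {g : ℝ → ℝ} (hg0 : g 0 = 1)
    (hmul : ∀ t s, 0 ≤ t → 0 ≤ s → g (t + s) = g t * g s) (n : ℕ) {s : ℝ} (hs : 0 ≤ s) :
    g (n * s) = g s ^ n := by
  induction n with
  | zero => simpa using hg0
  | succ n ih =>
    rw [Nat.cast_succ, add_one_mul, hmul _ _ (by positivity) hs, ih, pow_succ]

lemma eq_exp_of_add_eq_mul {g : ℝ → ℝ} {c : ℝ} (hg0 : g 0 = 1)
    (hmul : ∀ t s, 0 ≤ t → 0 ≤ s → g (t + s) = g t * g s)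
    (hderiv : HasDerivWithinAt g c (Set.Ioi 0) 0) {t : ℝ} (ht : 0 ≤ t) :
    g t = exp (c * t) := by
  rcases ht.eq_or_lt with rfl | ht
  · simpa using hg0
  have hdiv : Tendsto (fun n : ℕ => t / n) atTop (𝓝[>] 0) :=
    tendsto_nhdsWithin_iff.2 ⟨tendsto_const_div_atTop_nhds_zero_nat t,
      (eventually_gt_atTop 0).mono fun n hn => div_pos ht (Nat.cast_pos.2 hn)⟩
  have hslope : Tendsto (fun n : ℕ => n * (g (t / n) - 1)) atTop (𝓝 (c * t)) := by
    have h := ((hasDerivWithinAt_iff_tendsto_slope' (lt_irrefl 0)).1 hderiv).comp hdiv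
    refine (h.mul_const t).congr' ((eventually_gt_atTop 0).mono fun n hn => ?_)
    have : (n : ℝ) ≠ 0 := Nat.cast_ne_zero.2 hn.ne'
    simp only [Function.comp_apply, slope_def_field, hg0, sub_zero]
    field_simp
  have hpow : ∀ n : ℕ, 0 < n → g t = (1 + (g (t / n) - 1)) ^ n := fun n hn => by
    rw [add_sub_cancel, ← apply_natCast_mul_eq_pow_of_add_eq_mul hg0 hmul n (by positivity),
      mul_div_cancel₀ _ (Nat.cast_ne_zero.2 hn.ne')]
  exact tendsto_nhds_unique ((tendsto_const_nhds (x := g t)).congr'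
    ((eventually_gt_atTop 0).mono hpow)) (tendsto_one_add_pow_exp_of_tendsto hslope)

lemma natCast_mul_le_neg_log_of_le_one_sub_pow {p q : ℝ} {n : ℕ} (hp : 0 < p) (hq : q ≤ 1)
    (h : p ≤ (1 - q) ^ n) :
    n * q ≤ -log p := by
  have h1 : (1 - q) ^ n ≤ exp (-(n * q)) := by
    rw [neg_mul_eq_mul_neg, exp_nat_mul]
    exact pow_le_pow_left₀ (by linarith) (by linarith [add_one_le_exp (-q)]) n
  rw [le_neg, ← log_exp (-(n * q))]
  exact log_le_log hp (h.trans h1)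

lemma tendsto_measureReal_lt_atTop {Ω : Type*} [MeasurableSpace Ω] {P : Measure Ω}
    [IsProbabilityMeasure P] (Y : Ω → ℕ) :
    Tendsto (fun K : ℕ => P.real {ω | Y ω < K}) atTop (𝓝 1) := by
  have hunion : (⋃ K : ℕ, {ω | Y ω < K}) = Set.univ :=
    Set.eq_univ_of_forall fun ω => Set.mem_iUnion.2 ⟨Y ω + 1, Nat.lt_succ_self _⟩
  have hmono : Monotone fun K : ℕ => {ω | Y ω < K} := fun i j hij ω (hω : Y ω < i) =>
    hω.trans_le hij
  have h := tendsto_measure_iUnion_atTop (μ := P) hmono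
  rw [hunion, measure_univ] at h
  exact (ENNReal.tendsto_toReal ENNReal.one_ne_top).comp h

lemma abs_integral_sub_sum_le {Ω : Type*} [MeasurableSpace Ω] {P : Measure Ω} [IsFiniteMeasure P]
    {Y : Ω → ℕ} (hY : Measurable Y) {f : ℕ → ℝ} {B : ℝ} (hf : ∀ k, |f k| ≤ B) (m : ℕ) :
    |∫ ω, f (Y ω) ∂P - ∑ k ∈ range (m + 1), f k * P.real {ω | Y ω = k}| ≤
      B * P.real {ω | m < Y ω} := by
  have hlevel : ∀ k, MeasurableSet {ω | Y ω = k} := fun k => hY (measurableSet_singleton k)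
  have hint : Integrable (fun ω => f (Y ω)) P :=
    .of_bound (measurable_from_nat.comp hY).aestronglyMeasurable B (ae_of_all _ fun ω => hf _)
  have hlow : {ω | Y ω ≤ m} = ⋃ k ∈ range (m + 1), {ω | Y ω = k} := by
    ext ω; simp
  have hhigh : {ω | Y ω ≤ m}ᶜ = {ω | m < Y ω} := by ext ω; simp
  have hsum : ∫ ω in {ω | Y ω ≤ m}, f (Y ω) ∂P =
      ∑ k ∈ range (m + 1), f k * P.real {ω | Y ω = k} := by
    rw [hlow, integral_biUnion_finset _ (fun k _ => hlevel k)
      (fun i _ j _ hij => Set.disjoint_left.2 fun ω hi hj => hij (hi.symm.trans hj))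
      (fun k _ => hint.integrableOn)]
    refine sum_congr rfl fun k _ => ?_
    rw [setIntegral_congr_fun (hlevel k) fun ω (hω : Y ω = k) => by rw [hω], setIntegral_const,
      smul_eq_mul, mul_comm]
  rw [← integral_add_compl (measurableSet_le hY measurable_const) hint, hsum, add_sub_cancel_left,
    hhigh, ← Real.norm_eq_abs]
  exact norm_setIntegral_le_of_norm_le_const (measure_lt_top _ _) fun ω _ =>
    (Real.norm_eq_abs _).trans_le (hf _)

section CountingProcess

variable {Ω : Type*} [MeasurableSpace Ω] {P : Measure Ω} {N : ℝ → Ω → ℕ}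

lemma identDistrib_increment (hNmeas : ∀ t, Measurable (N t))
    (hstat : ∀ t s : ℝ, 0 ≤ t → 0 ≤ s → ∀ k : ℕ,
      P {ω | N (t + s) ω - N t ω = k} = P {ω | N s ω = k})
    {t s : ℝ} (ht : 0 ≤ t) (hs : 0 ≤ s) :
    IdentDistrib (fun ω => N (t + s) ω - N t ω) (N s) P P := by
  have hinc : Measurable fun ω => N (t + s) ω - N t ω := (hNmeas _).sub (hNmeas _)
  refine ⟨hinc.aemeasurable, (hNmeas s).aemeasurable, Measure.ext_of_singleton fun k => ?_⟩
  rw [Measure.map_apply hinc (measurableSet_singleton k),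
    Measure.map_apply (hNmeas s) (measurableSet_singleton k)]
  exact hstat t s ht hs k

lemma indepFun_increment (hN0 : ∀ ω, N 0 ω = 0)
    (hindep : ∀ t₁ t₂ t₃ : ℝ, 0 ≤ t₁ → t₁ ≤ t₂ → t₂ ≤ t₃ →
      IndepFun (fun ω => N t₂ ω - N t₁ ω) (fun ω => N t₃ ω - N t₂ ω) P)
    {t s : ℝ} (ht : 0 ≤ t) (hs : 0 ≤ s) :
    IndepFun (N t) (fun ω => N (t + s) ω - N t ω) P := by
  simpa [hN0] using hindep 0 t (t + s) le_rfl ht (by linarith)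

lemma integral_pow_add_eq_mul (hNmeas : ∀ t, Measurable (N t)) (hmono : ∀ ω, Monotone (N · ω))
    (hinc_ident : ∀ t s, 0 ≤ t → 0 ≤ s → IdentDistrib (fun ω => N (t + s) ω - N t ω) (N s) P P)
    (hinc_indep : ∀ t s, 0 ≤ t → 0 ≤ s → IndepFun (N t) (fun ω => N (t + s) ω - N t ω) P)
    (r : ℝ) {t s : ℝ} (ht : 0 ≤ t) (hs : 0 ≤ s) :
    ∫ ω, r ^ N (t + s) ω ∂P = (∫ ω, r ^ N t ω ∂P) * ∫ ω, r ^ N s ω ∂P := by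
  have hsplit : ∀ ω, r ^ N (t + s) ω = r ^ N t ω * r ^ (N (t + s) ω - N t ω) := fun ω => by
    rw [← pow_add, Nat.add_sub_cancel' (hmono ω (by linarith))]
  have hpow : Measurable fun k : ℕ => r ^ k := measurable_from_nat
  have hinc : Measurable fun ω => N (t + s) ω - N t ω := (hNmeas _).sub (hNmeas _)
  simp_rw [hsplit]
  exact (((hinc_indep t s ht hs).comp hpow hpow).integral_fun_mul_eq_mul_integral
    (hpow.comp (hNmeas t)).aestronglyMeasurable (hpow.comp hinc).aestronglyMeasurable).trans
    (congrArg _ ((hinc_ident t s ht hs).comp hpow).integral_eq)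

lemma measure_lt_le_pow (hmono : ∀ ω, Monotone (N · ω))
    (hinc_ident : ∀ t s, 0 ≤ t → 0 ≤ s → IdentDistrib (fun ω => N (t + s) ω - N t ω) (N s) P P)
    (hinc_indep : ∀ t s, 0 ≤ t → 0 ≤ s → IndepFun (N t) (fun ω => N (t + s) ω - N t ω) P)
    [IsProbabilityMeasure P] (K : ℕ) {s : ℝ} (hs : 0 ≤ s) (n : ℕ) :
    P {ω | N (n * s) ω < K} ≤ P {ω | N s ω < K} ^ n := by
  induction n with
  | zero => simpa using prob_le_one
  | succ n ih =>
    have hns : 0 ≤ n * s := by positivity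
    have hsub : {ω | N ((n + 1 : ℕ) * s) ω < K} ⊆
        N (n * s) ⁻¹' Set.Iio K ∩ (fun ω => N (n * s + s) ω - N (n * s) ω) ⁻¹' Set.Iio K :=
      fun ω hω => by
        simp only [Nat.cast_succ, add_one_mul, Set.mem_ofPred_eq] at hω
        exact ⟨(hmono ω (by linarith)).trans_lt hω, (Nat.sub_le _ _).trans_lt hω⟩
    calc P {ω | N ((n + 1 : ℕ) * s) ω < K}
        ≤ P (N (n * s) ⁻¹' Set.Iio K) * P (N s ⁻¹' Set.Iio K) := by
          rw [← (hinc_ident _ _ hns hs).measure_mem_eq measurableSet_Iio,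
            ← (hinc_indep _ _ hns hs).measure_inter_preimage_eq_mul _ _ measurableSet_Iio
              measurableSet_Iio]
          exact measure_mono hsub
      _ ≤ P {ω | N s ω < K} ^ (n + 1) := by
          rw [pow_succ]; exact mul_le_mul_left ih _

lemma measureReal_le_le_neg_log_mul (hNmeas : ∀ t, Measurable (N t)) (hmono : ∀ ω, Monotone (N · ω))
    (hinc_ident : ∀ t s, 0 ≤ t → 0 ≤ s → IdentDistrib (fun ω => N (t + s) ω - N t ω) (N s) P P)
    (hinc_indep : ∀ t s, 0 ≤ t → 0 ≤ s → IndepFun (N t) (fun ω => N (t + s) ω - N t ω) P)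
    [IsProbabilityMeasure P] (K : ℕ) {s : ℝ} (hs0 : 0 < s) (hs1 : s ≤ 1)
    (hp : 0 < P.real {ω | N 1 ω < K}) :
    P.real {ω | K ≤ N s ω} ≤ 2 * -log (P.real {ω | N 1 ω < K}) * s := by
  set q := P.real {ω | K ≤ N s ω}
  set n := ⌊1 / s⌋₊
  have hn1 : (n : ℝ) * s ≤ 1 := (le_div_iff₀ hs0).1 (Nat.floor_le (by positivity))
  have hn2 : 1 ≤ 2 * n * s := by
    have h1 : 1 ≤ (n : ℝ) := by
      exact_mod_cast Nat.le_floor (by rw [Nat.cast_one]; exact (one_le_div hs0).2 hs1)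
    have h2 : 1 / s < n + 1 := Nat.lt_floor_add_one _
    rw [div_lt_iff₀ hs0] at h2
    nlinarith
  have hcompl : P.real {ω | N s ω < K} = 1 - q := by
    have : {ω | N s ω < K} = {ω | K ≤ N s ω}ᶜ := by ext; simp
    rw [this, probReal_compl_eq_one_sub (measurableSet_le measurable_const (hNmeas s))]
  have hle : P.real {ω | N 1 ω < K} ≤ (1 - q) ^ n := by
    calc P.real {ω | N 1 ω < K} ≤ P.real {ω | N (n * s) ω < K} :=
          measureReal_mono fun ω hω => (hmono ω hn1).trans_lt hω
      _ ≤ P.real {ω | N s ω < K} ^ n := by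
          rw [measureReal_def, measureReal_def, ← ENNReal.toReal_pow]
          exact ENNReal.toReal_mono (by finiteness)
            (measure_lt_le_pow hmono hinc_ident hinc_indep K hs0.le n)
      _ = (1 - q) ^ n := by rw [hcompl]
  have hq0 : 0 ≤ q := measureReal_nonneg
  calc q ≤ 2 * n * s * q := le_mul_of_one_le_left hq0 hn2
    _ = 2 * s * (n * q) := by ring
    _ ≤ 2 * s * -log (P.real {ω | N 1 ω < K}) :=
        mul_le_mul_of_nonneg_left
          (natCast_mul_le_neg_log_of_le_one_sub_pow hp measureReal_le_one hle) (by positivity)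
    _ = _ := by ring

lemma isLittleO_measureReal_lt (hNmeas : ∀ t, Measurable (N t)) (hmono : ∀ ω, Monotone (N · ω))
    (hinc_ident : ∀ t s, 0 ≤ t → 0 ≤ s → IdentDistrib (fun ω => N (t + s) ω - N t ω) (N s) P P)
    (hinc_indep : ∀ t s, 0 ≤ t → 0 ≤ s → IndepFun (N t) (fun ω => N (t + s) ω - N t ω) P)
    [IsProbabilityMeasure P] (m : ℕ)
    (hsmall : ∀ k, m < k → (fun s => P.real {ω | N s ω = k}) =o[𝓝[>] 0] fun s => s) :
    (fun s => P.real {ω | m < N s ω}) =o[𝓝[>] 0] fun s => s := by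
  refine isLittleO_iff.2 fun ε hε => ?_
  have hlog : Tendsto (fun K : ℕ => -log (P.real {ω | N 1 ω < K})) atTop (𝓝 0) := by
    simpa using ((continuousAt_log one_ne_zero).tendsto.comp
      (tendsto_measureReal_lt_atTop (N 1))).neg
  obtain ⟨K, hKm, hKpos, hKlog⟩ : ∃ K : ℕ, m < K ∧ 0 < P.real {ω | N 1 ω < K} ∧
      -log (P.real {ω | N 1 ω < K}) ≤ ε / 4 :=
    ((eventually_gt_atTop m).and (((tendsto_measureReal_lt_atTop (N 1)).eventually
      (eventually_gt_nhds one_pos)).and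
        (hlog.eventually (eventually_le_nhds (by positivity))))).exists
  have hfin := (IsLittleO.fun_sum fun k (hk : k ∈ Ioo m K) => hsmall k (mem_Ioo.1 hk).1).def
    (half_pos hε)
  filter_upwards [hfin, Ioc_mem_nhdsGT one_pos] with s hs hs01
  have hsub : {ω | m < N s ω} ⊆ (⋃ k ∈ Ioo m K, {ω | N s ω = k}) ∪ {ω | K ≤ N s ω} := by
    intro ω hω
    by_cases hK : K ≤ N s ω
    · exact Or.inr hK
    · exact Or.inl (Set.mem_biUnion (mem_Ioo.2 ⟨hω, not_le.1 hK⟩) rfl)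
  rw [norm_of_nonneg measureReal_nonneg, norm_of_nonneg hs01.1.le]
  rw [norm_of_nonneg (sum_nonneg fun _ _ => measureReal_nonneg), norm_of_nonneg hs01.1.le] at hs
  calc P.real {ω | m < N s ω}
      ≤ ∑ k ∈ Ioo m K, P.real {ω | N s ω = k} + P.real {ω | K ≤ N s ω} :=
        (measureReal_mono hsub).trans ((measureReal_union_le _ _).trans
          (add_le_add_left (measureReal_biUnion_finset_le _ _) _))
    _ ≤ ε / 2 * s + ε / 2 * s := add_le_add hs
        ((measureReal_le_le_neg_log_mul hNmeas hmono hinc_ident hinc_indep K hs01.1 hs01.2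
          hKpos).trans (mul_le_mul_of_nonneg_right (by linarith) hs01.1.le))
    _ = ε * s := by ring

lemma hasDerivWithinAt_integral_pow [IsProbabilityMeasure P] (hNmeas : ∀ t, Measurable (N t))
    (hN0 : ∀ ω, N 0 ω = 0) {r : ℝ} (hr : |r| ≤ 1) {a : ℕ → ℝ} (m : ℕ)
    (ha : ∀ k, 1 ≤ k → (fun s => P.real {ω | N s ω = k} - a k * s) =o[𝓝[>] 0] fun s => s)
    (htail : (fun s => P.real {ω | m < N s ω}) =o[𝓝[>] 0] fun s => s) :
    HasDerivWithinAt (fun s => ∫ ω, r ^ N s ω ∂P) (∑ k ∈ range (m + 1), (r ^ k - 1) * a k)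
      (Set.Ioi 0) 0 := by
  have hbound : ∀ k : ℕ, |r ^ k - 1| ≤ 2 := fun k => by
    have := pow_le_one₀ (abs_nonneg r) hr (n := k)
    rw [← abs_pow] at this
    linarith [abs_sub (r ^ k) 1, abs_one (α := ℝ)]
  have hcentre : ∀ s, ∫ ω, r ^ N s ω ∂P - 1 = ∫ ω, (r ^ N s ω - 1) ∂P := fun s => by
    have hint : Integrable (fun ω => r ^ N s ω) P :=
      .of_bound (measurable_from_nat.comp (hNmeas s)).aestronglyMeasurable 1
        (ae_of_all _ fun ω => by rw [norm_pow]; exact pow_le_one₀ (norm_nonneg r) hr)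
    rw [integral_sub hint (integrable_const 1), integral_const, probReal_univ, one_smul]
  have hsplit : ∀ s, ∫ ω, r ^ N s ω ∂P - ∫ ω, r ^ N 0 ω ∂P -
      (s - 0) • ∑ k ∈ range (m + 1), (r ^ k - 1) * a k =
      (∫ ω, (r ^ N s ω - 1) ∂P - ∑ k ∈ range (m + 1), (r ^ k - 1) * P.real {ω | N s ω = k}) +
        ∑ k ∈ range (m + 1), (r ^ k - 1) * (P.real {ω | N s ω = k} - a k * s) := fun s => by
    have hG0 : ∫ ω, r ^ N 0 ω ∂P = 1 := by simp [hN0]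
    rw [hG0, hcentre, smul_eq_mul, sub_zero, mul_sum]
    simp only [mul_sub, sum_sub_distrib]
    ring_nf
  refine hasDerivWithinAt_iff_isLittleO.2 ((IsLittleO.add (IsBigO.trans_isLittleO
    (.of_bound 2 (.of_forall fun s => ?_)) htail) (IsLittleO.fun_sum fun k _ => ?_)).congr
    (fun s => (hsplit s).symm) (fun s => (sub_zero s).symm))
  · rw [Real.norm_eq_abs, Real.norm_eq_abs, abs_of_nonneg measureReal_nonneg]
    exact abs_integral_sub_sum_le (hNmeas s) hbound m
  · rcases k.eq_zero_or_pos with rfl | hk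
    · simp
    · exact (ha k hk).const_mul_left _

end CountingProcess

theorem degenerate_bell_process_laplace_functional (l α θ : ℝ) (hl : l ∈ Set.Ioc (0 : ℝ) 1) (hα : 0 < α) (hθ : 0 < θ)
    {Ω : Type*} [MeasurableSpace Ω] (P : Measure Ω) [IsProbabilityMeasure P]
    (N : ℝ → Ω → ℕ)
    (hNmeas : ∀ t : ℝ, Measurable (N t))
    (hN0 : ∀ ω, N 0 ω = 0)
    (hmono : ∀ ω, ∀ ⦃s t : ℝ⦄, s ≤ t → N s ω ≤ N t ω)
    (hstat : ∀ t s : ℝ, 0 ≤ t → 0 ≤ s → ∀ k : ℕ,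
      P {ω | N (t + s) ω - N t ω = k} = P {ω | N s ω = k})
    (hindep : ∀ t₁ t₂ t₃ : ℝ, 0 ≤ t₁ → t₁ ≤ t₂ → t₂ ≤ t₃ →
      IndepFun (fun ω => N t₂ ω - N t₁ ω) (fun ω => N t₃ ω - N t₂ ω) P)
    (hrate : ∀ k : ℕ, 1 ≤ k → ∀ t : ℝ, 0 ≤ t →
      (fun s => (P {ω | N (t + s) ω - N t ω = k}).toReal
          - α * s * dFall l 1 k * θ ^ k / (k.factorial : ℝ))
        =o[nhdsWithin 0 (Set.Ioi 0)] (fun s : ℝ => s))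
    (x : ℝ) (hx : 0 < x) :
    (∀ t ∈ Set.Ici (0 : ℝ),
      HasDerivWithinAt (fun u => ∫ ω, Real.exp (-(x * (N u ω : ℝ))) ∂P)
        (α * (degExp l 1 (Real.exp (-x) * θ) - degExp l 1 θ) *
          ∫ ω, Real.exp (-(x * (N t ω : ℝ))) ∂P) (Set.Ici 0) t) ∧
    (∫ ω, Real.exp (-(x * (N 0 ω : ℝ))) ∂P) = 1 ∧
    (∀ t : ℝ, 0 ≤ t →
      (∫ ω, Real.exp (-(x * (N t ω : ℝ))) ∂P) =
        Real.exp (α * t * (degExp l 1 (Real.exp (-x) * θ) - degExp l 1 θ))) := by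
  have hjump : ∀ k, 1 ≤ k →
      (fun s => P.real {ω | N s ω = k} - bellJumpRate l α θ k * s) =o[𝓝[>] 0] fun s => s :=
    fun k hk => by
      convert hrate k hk 0 le_rfl using 2 with s
      simp [bellJumpRate, hN0, measureReal_def]
      ring
  obtain ⟨m, hm⟩ := exists_nat_mul_eq_one_of_bellJumpRate_nonneg hl.1 hα hθ fun k hk =>
    nonneg_of_isLittleO_sub_mul (fun _ => measureReal_nonneg) (hjump k hk)
  have hinc_ident := fun t s (ht : (0 : ℝ) ≤ t) (hs : 0 ≤ s) =>
    identDistrib_increment hNmeas hstat ht hs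
  have hinc_indep := fun t s (ht : (0 : ℝ) ≤ t) (hs : 0 ≤ s) =>
    indepFun_increment hN0 hindep ht hs
  have htail := isLittleO_measureReal_lt hNmeas hmono hinc_ident hinc_indep m fun k hk => by
    simpa [bellJumpRate, dFall_one_eq_zero hm hk] using hjump k (by omega)
  have hr : |exp (-x)| ≤ 1 := by rw [abs_exp]; exact exp_le_one_iff.2 (by linarith)
  have hderiv := hasDerivWithinAt_integral_pow hNmeas hN0 hr m hjump htail
  rw [sum_range_pow_sub_one_mul_bellJumpRate hm] at hderiv
  have hexp := fun t (ht : 0 ≤ t) => eq_exp_of_add_eq_mul (by simp [hN0])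
    (fun t s ht hs => integral_pow_add_eq_mul hNmeas hmono hinc_ident hinc_indep _ ht hs) hderiv ht
  have hlaplace : ∀ t, ∫ ω, exp (-(x * N t ω)) ∂P = ∫ ω, exp (-x) ^ N t ω ∂P := fun t => by
    simp_rw [← exp_nat_mul, mul_neg, mul_comm]
  simp only [hlaplace]
  refine ⟨fun t ht => ?_, by simp [hN0], fun t ht => by rw [hexp t ht, mul_right_comm]⟩
  rw [hexp t ht]
  exact (((hasDerivAt_id t).const_mul _).exp.hasDerivWithinAt.congr (fun u hu => hexp u hu)
    (hexp t ht)).congr_deriv (by simp [mul_comm])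
end
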